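/- Characterization of Schmidt-symmetric states (Theorem 4): a bipartite density matrix ρ on ℂ^d ⊗ ℂ^d admits a decomposition ρ = Σ_i λ_i A_i ⊗ A_i^* with λ_i ≥ 0 and {A_i} an orthonormal family with respect to the Hilbert–Schmidt inner product (A_i^* denoting entrywise complex conjugation) if and only if ‖R(ρ)‖_tr = Tr R(ρ), equivalently if and only if the realigned matrix R(ρ) is positive semidefinite. -/

import Mathlib

open Matrix Kronecker ComplexOrder

/-- Trace norm `‖X‖_tr = Tr √(X Xᴴ)`. -/
noncomputable def traceNorm {m n : Type*} [Fintype m] [Fintype n] [DecidableEq m]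
    (X : Matrix m n ℂ) : ℝ :=
  (((Matrix.posSemidef_self_mul_conjTranspose X).1.eigenvectorUnitary.1 *
      diagonal ((fun x : ℝ => (x : ℂ)) ∘ Real.sqrt ∘
        (Matrix.posSemidef_self_mul_conjTranspose X).1.eigenvalues) *
      (star (Matrix.posSemidef_self_mul_conjTranspose X).1.eigenvectorUnitary :
        Matrix m m ℂ)).trace).re

/-- A density matrix: positive semidefinite with trace 1. -/
def IsDensityMatrix {n : Type*} [Fintype n] (ρ : Matrix n n ℂ) : Prop :=
  ρ.PosSemidef ∧ ρ.trace = 1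

/-- The realignment map: `R(ρ)_{(i,j),(k,l)} = ρ_{(i,k),(j,l)}`. -/
def realign {dA dB : ℕ} (ρ : Matrix (Fin dA × Fin dB) (Fin dA × Fin dB) ℂ) :
    Matrix (Fin dA × Fin dA) (Fin dB × Fin dB) ℂ :=
  fun p q => ρ (p.1, q.1) (p.2, q.2)

/-- Partial transpose on the second subsystem: `(ρ^{T₂})_{(i,k),(j,l)} = ρ_{(i,l),(j,k)}`. -/
def ptranspose2 {d : ℕ} (ρ : Matrix (Fin d × Fin d) (Fin d × Fin d) ℂ) :
    Matrix (Fin d × Fin d) (Fin d × Fin d) ℂ :=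
  fun p q => ρ (p.1, q.2) (q.1, p.2)

/-- The swap (exchange) operator `F_{(i,k),(j,l)} = δ_{il} δ_{kj}`. -/
def swapOp (d : ℕ) : Matrix (Fin d × Fin d) (Fin d × Fin d) ℂ :=
  fun p q => if p.1 = q.2 ∧ p.2 = q.1 then 1 else 0

/-- The unnormalized maximally entangled projector `(|Ω⟩⟨Ω|)_{(i,k),(j,l)} = δ_{ik} δ_{jl}`. -/
def omegaProj (d : ℕ) : Matrix (Fin d × Fin d) (Fin d × Fin d) ℂ :=
  fun p q => if p.1 = p.2 ∧ q.1 = q.2 then 1 else 0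

/-- Separability: `ρ` is a finite convex combination of products of density matrices. -/
def IsSeparableState {dA dB : ℕ} (ρ : Matrix (Fin dA × Fin dB) (Fin dA × Fin dB) ℂ) : Prop :=
  ∃ (m : ℕ) (p : Fin m → ℝ) (σ : Fin m → Matrix (Fin dA) (Fin dA) ℂ)
    (τ : Fin m → Matrix (Fin dB) (Fin dB) ℂ),
    (∀ k, 0 ≤ p k) ∧ (∑ k, p k = 1) ∧ (∀ k, IsDensityMatrix (σ k)) ∧
    (∀ k, IsDensityMatrix (τ k)) ∧ ρ = ∑ k, (p k : ℂ) • (σ k ⊗ₖ τ k)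

/-!
Realignment maps `A ⊗ B` to the rank-one matrix `vec A (vec B)ᵀ`, and the Hilbert–Schmidt inner
product of matrices is the dot product of their vectorisations. So a decomposition
`ρ = Σ λᵢ Aᵢ ⊗ Āᵢ` with orthonormal `Aᵢ` is the same thing as an orthonormal spectral decomposition
`R(ρ) = Σ λᵢ vᵢ vᵢᴴ`, which exists iff `R(ρ) ⪰ 0`.

For the trace norm, let `uᵢ` be an orthonormal eigenbasis of `X Xᴴ` with eigenvalues `tᵢ`. Then
`‖X‖_tr = Σ √tᵢ`, `Tr X = Σ ⟪Xᴴ uᵢ, uᵢ⟫` and `‖Xᴴ uᵢ‖ = √tᵢ`, so Cauchy–Schwarz gives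
`Re Tr X ≤ ‖X‖_tr`, with equality only if `Xᴴ uᵢ = √tᵢ uᵢ` for all `i`, that is `Xᴴ = √(X Xᴴ) ⪰ 0`.
Conversely, if `X ⪰ 0` then `√(X Xᴴ) = √(X²) = X`.
-/

open scoped InnerProductSpace MatrixOrder

theorem eq_norm_smul_of_re_inner_eq_norm {𝕜 E : Type*} [RCLike 𝕜] [NormedAddCommGroup E]
    [InnerProductSpace 𝕜 E] {x u : E} (hu : ‖u‖ = 1) (h : RCLike.re ⟪x, u⟫_𝕜 = ‖x‖) :
    x = (‖x‖ : 𝕜) • u := by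
  have : ‖x - (‖x‖ : 𝕜) • u‖ ^ 2 = 0 := by
    rw [@norm_sub_sq 𝕜, inner_smul_right, RCLike.re_ofReal_mul, h, norm_smul, hu,
      RCLike.norm_ofReal, abs_norm]
    ring
  rwa [sq_eq_zero_iff, norm_eq_zero, sub_eq_zero] at this

namespace Matrix

section Spectral

variable {𝕜 n : Type*} [RCLike 𝕜] [Fintype n] [DecidableEq n]

theorem IsHermitian.eq_sum_eigenvalues_smul_vecMulVec {A : Matrix n n 𝕜} (hA : A.IsHermitian) :
    A = ∑ i, (hA.eigenvalues i : 𝕜) •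
      vecMulVec ⇑(hA.eigenvectorBasis i) (star ⇑(hA.eigenvectorBasis i)) := by
  conv_lhs => rw [hA.spectral_theorem]
  ext p q
  rw [Unitary.conjStarAlgAut_apply, mul_apply]
  simp only [mul_diagonal, sum_apply, smul_apply, vecMulVec_apply, star_apply, Pi.star_apply,
    eigenvectorUnitary_apply, Function.comp_apply]
  exact Finset.sum_congr rfl fun j _ => by ring

theorem posSemidef_iff_exists_orthonormal_sum_vecMulVec {M : Matrix n n 𝕜} :
    M.PosSemidef ↔ ∃ (r : ℕ) (lam : Fin r → ℝ) (v : Fin r → n → 𝕜), (∀ i, 0 ≤ lam i) ∧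
      (∀ i j, star (v i) ⬝ᵥ v j = if i = j then 1 else 0) ∧
      M = ∑ i, (lam i : 𝕜) • vecMulVec (v i) (star (v i)) := by
  constructor
  · intro hM
    set b := hM.1.eigenvectorBasis
    set e := (Fintype.equivFin n).symm
    refine ⟨Fintype.card n, hM.1.eigenvalues ∘ e, fun i => b (e i),
      fun i => hM.eigenvalues_nonneg _, fun i j => ?_, ?_⟩
    · rw [dotProduct_comm, ← EuclideanSpace.inner_eq_star_dotProduct,
        orthonormal_iff_ite.mp b.orthonormal]
      simp only [e.injective.eq_iff]
    · exact hM.1.eq_sum_eigenvalues_smul_vecMulVec.trans (e.sum_comp _).symm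
  · rintro ⟨r, lam, v, hlam, -, rfl⟩
    exact posSemidef_sum _ fun i _ =>
      (posSemidef_vecMulVec_self_star (v i)).smul (RCLike.ofReal_nonneg.mpr (hlam i))

theorem IsHermitian.cfc_mulVec_eigenvectorBasis {A : Matrix n n 𝕜} (hA : A.IsHermitian)
    (f : ℝ → ℝ) (j : n) :
    cfc f A *ᵥ ⇑(hA.eigenvectorBasis j) =
      (f (hA.eigenvalues j) : 𝕜) • ⇑(hA.eigenvectorBasis j) := by
  rw [hA.cfc_eq, IsHermitian.cfc, Unitary.conjStarAlgAut_apply, ← mulVec_mulVec,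
    ← mulVec_mulVec, star_eigenvectorUnitary_mulVec, diagonal_mulVec_single, mul_one]
  ext i
  simp [mul_comm]

theorem IsHermitian.trace_cfc {A : Matrix n n 𝕜} (hA : A.IsHermitian) (f : ℝ → ℝ) :
    (cfc f A).trace = ∑ i, (f (hA.eigenvalues i) : 𝕜) := by
  rw [hA.cfc_eq, IsHermitian.cfc, Unitary.conjStarAlgAut_apply, trace_mul_cycle,
    Unitary.coe_star_mul_self, Matrix.one_mul, trace_diagonal]
  rfl

theorem trace_eq_sum_inner_conjTranspose (X : Matrix n n 𝕜)
    (b : OrthonormalBasis n 𝕜 (EuclideanSpace 𝕜 n)) :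
    X.trace = ∑ i, ⟪toEuclideanLin Xᴴ (b i), b i⟫_𝕜 := by
  rw [← trace_toLin_eq X (PiLp.basisFun 2 𝕜 n), ← toLpLin_eq_toLin,
    LinearMap.trace_eq_sum_inner _ b]
  simp [toEuclideanLin_conjTranspose_eq_adjoint, LinearMap.adjoint_inner_left]

theorem norm_toEuclideanLin_conjTranspose_eigenvectorBasis {m : Type*} [Fintype m]
    [DecidableEq m] (X : Matrix n m 𝕜) (i : n) :
    ‖toEuclideanLin Xᴴ ((posSemidef_self_mul_conjTranspose X).1.eigenvectorBasis i)‖ =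
      √((posSemidef_self_mul_conjTranspose X).1.eigenvalues i) := by
  set hM := (posSemidef_self_mul_conjTranspose X).1
  rw [← Real.sqrt_sq (norm_nonneg _), @norm_sq_eq_re_inner 𝕜,
    toEuclideanLin_conjTranspose_eq_adjoint, LinearMap.adjoint_inner_left,
    ← toEuclideanLin_conjTranspose_eq_adjoint, ← LinearMap.comp_apply, ← toLpLin_mul_same,
    toLpLin_apply, hM.mulVec_eigenvectorBasis]
  simp only [WithLp.toLp_smul, WithLp.toLp_ofLp]
  rw [RCLike.real_smul_eq_coe_smul (K := 𝕜), inner_smul_right, inner_self_eq_norm_sq_to_K,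
    hM.eigenvectorBasis.orthonormal.1 i]
  simp

end Spectral

-- `Aᵀ.vec` is the row-major vectorisation `(i, j) ↦ A i j`; Mathlib's `vec` stacks columns.
theorem trace_conjTranspose_mul_eq_star_vec_transpose_dotProduct {R m n : Type*} [CommSemiring R]
    [StarRing R] [Fintype m] [Fintype n] (A B : Matrix m n R) :
    (Aᴴ * B).trace = star Aᵀ.vec ⬝ᵥ Bᵀ.vec := by
  rw [star_vec_dotProduct_vec, ← trace_transpose (Aᴴ * B), transpose_mul, trace_mul_comm]
  rfl

end Matrix

section TraceNorm

variable {m : Type*} [Fintype m] [DecidableEq m]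

theorem traceNorm_eq_re_trace_cfc_sqrt {n : Type*} [Fintype n] (X : Matrix m n ℂ) :
    traceNorm X = (cfc Real.sqrt (X * Xᴴ)).trace.re := by
  rw [(posSemidef_self_mul_conjTranspose X).1.cfc_eq]
  rfl

theorem traceNorm_eq_sum_sqrt_eigenvalues {n : Type*} [Fintype n] (X : Matrix m n ℂ) :
    traceNorm X = ∑ i, √((posSemidef_self_mul_conjTranspose X).1.eigenvalues i) := by
  rw [traceNorm_eq_re_trace_cfc_sqrt, (posSemidef_self_mul_conjTranspose X).1.trace_cfc,
    Complex.re_sum]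
  rfl

theorem Matrix.PosSemidef.traceNorm_eq_trace {X : Matrix m m ℂ} (hX : X.PosSemidef) :
    (traceNorm X : ℂ) = X.trace := by
  have hsqrt : cfc Real.sqrt (X * Xᴴ) = X := by
    have hXX := (posSemidef_self_mul_conjTranspose X).nonneg
    rw [← cfcₙ_eq_cfc, ← CFC.sqrt_eq_real_sqrt _ hXX, hX.1.eq, CFC.sqrt_mul_self X hX.nonneg]
  rw [traceNorm_eq_re_trace_cfc_sqrt, hsqrt]
  have hreal := trace_conjTranspose X
  rw [hX.1.eq] at hreal
  exact Complex.conj_eq_iff_re.mp hreal.symm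

theorem Matrix.posSemidef_of_traceNorm_eq_trace {X : Matrix m m ℂ}
    (h : (traceNorm X : ℂ) = X.trace) : X.PosSemidef := by
  set hM := (posSemidef_self_mul_conjTranspose X).1
  set b := hM.eigenvectorBasis
  set T := toEuclideanLin Xᴴ
  have hb : ∀ i, ‖b i‖ = 1 := b.orthonormal.1
  have hT : ∀ i, ‖T (b i)‖ = √(hM.eigenvalues i) :=
    norm_toEuclideanLin_conjTranspose_eigenvectorBasis X
  have hle : ∀ i ∈ Finset.univ, RCLike.re ⟪T (b i), b i⟫_ℂ ≤ √(hM.eigenvalues i) := fun i _ => by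
    simpa [hb, hT] using re_inner_le_norm (𝕜 := ℂ) (T (b i)) (b i)
  have hsum : ∑ i, RCLike.re ⟪T (b i), b i⟫_ℂ = ∑ i, √(hM.eigenvalues i) := by
    have := congrArg Complex.re h
    rwa [Complex.ofReal_re, traceNorm_eq_sum_sqrt_eigenvalues,
      trace_eq_sum_inner_conjTranspose X b, Complex.re_sum, eq_comm] at this
  have hTb : ∀ i, T (b i) = toEuclideanLin (cfc Real.sqrt (X * Xᴴ)) (b i) := fun i => by
    have hi := (Finset.sum_eq_sum_iff_of_le hle).mp hsum i (Finset.mem_univ i)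
    rw [← hT] at hi
    rw [eq_norm_smul_of_re_inner_eq_norm (hb i) hi, hT, toLpLin_apply,
      hM.cfc_mulVec_eigenvectorBasis]
    rfl
  have hX : Xᴴ = cfc Real.sqrt (X * Xᴴ) :=
    toEuclideanLin.injective (b.toBasis.ext fun i => by simpa using hTb i)
  have hXnonneg : 0 ≤ Xᴴ := hX ▸ cfc_nonneg fun x _ => Real.sqrt_nonneg x
  exact posSemidef_conjTranspose_iff.mp hXnonneg.posSemidef

theorem traceNorm_eq_trace_iff_posSemidef {X : Matrix m m ℂ} :
    (traceNorm X : ℂ) = X.trace ↔ X.PosSemidef :=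
  ⟨Matrix.posSemidef_of_traceNorm_eq_trace, Matrix.PosSemidef.traceNorm_eq_trace⟩

end TraceNorm

theorem realign_injective {dA dB : ℕ} : Function.Injective (realign (dA := dA) (dB := dB)) :=
  fun _ _ h => Matrix.ext fun p q => congrFun (congrFun h (p.1, q.1)) (p.2, q.2)

theorem realign_sum_smul_kronecker {dA dB : ℕ} {ι : Type*} [Fintype ι] (c : ι → ℂ)
    (A : ι → Matrix (Fin dA) (Fin dA) ℂ) (B : ι → Matrix (Fin dB) (Fin dB) ℂ) :
    realign (∑ i, c i • (A i ⊗ₖ B i)) = ∑ i, c i • vecMulVec (A i)ᵀ.vec (B i)ᵀ.vec := by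
  ext p q
  simp [realign, Matrix.sum_apply, vecMulVec_apply]

def IsSchmidtSymmetric {d : ℕ} (ρ : Matrix (Fin d × Fin d) (Fin d × Fin d) ℂ) : Prop :=
  ∃ (r : ℕ) (lam : Fin r → ℝ) (A : Fin r → Matrix (Fin d) (Fin d) ℂ),
    (∀ i, 0 ≤ lam i) ∧
    (∀ i j, ((A i)ᴴ * A j).trace = if i = j then 1 else 0) ∧
    ρ = ∑ i, (lam i : ℂ) • (A i ⊗ₖ (A i).map (starRingEnd ℂ))

theorem isSchmidtSymmetric_iff_posSemidef_realign {d : ℕ}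
    (ρ : Matrix (Fin d × Fin d) (Fin d × Fin d) ℂ) :
    IsSchmidtSymmetric ρ ↔ (realign ρ).PosSemidef := by
  simp only [IsSchmidtSymmetric, posSemidef_iff_exists_orthonormal_sum_vecMulVec,
    trace_conjTranspose_mul_eq_star_vec_transpose_dotProduct]
  constructor
  · rintro ⟨r, lam, A, hlam, hA, rfl⟩
    exact ⟨r, lam, fun i => (A i)ᵀ.vec, hlam, hA, realign_sum_smul_kronecker _ _ _⟩
  · rintro ⟨r, lam, v, hlam, hv, hρ⟩
    refine ⟨r, lam, fun i => of (Function.curry (v i)), hlam, hv, realign_injective ?_⟩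
    rw [hρ, realign_sum_smul_kronecker]
    rfl

theorem schmidt_symmetric_characterization_general {d : ℕ}
    (ρ : Matrix (Fin d × Fin d) (Fin d × Fin d) ℂ) :
    ((∃ (r : ℕ) (lam : Fin r → ℝ) (A : Fin r → Matrix (Fin d) (Fin d) ℂ),
        (∀ i, 0 ≤ lam i) ∧
        (∀ i j, ((A i)ᴴ * A j).trace = if i = j then 1 else 0) ∧
        ρ = ∑ i, (lam i : ℂ) • (A i ⊗ₖ (A i).map (starRingEnd ℂ))) ↔
      (traceNorm (realign ρ) : ℂ) = (realign ρ).trace) ∧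
    ((∃ (r : ℕ) (lam : Fin r → ℝ) (A : Fin r → Matrix (Fin d) (Fin d) ℂ),
        (∀ i, 0 ≤ lam i) ∧
        (∀ i j, ((A i)ᴴ * A j).trace = if i = j then 1 else 0) ∧
        ρ = ∑ i, (lam i : ℂ) • (A i ⊗ₖ (A i).map (starRingEnd ℂ))) ↔
      (realign ρ).PosSemidef) :=
  have hSchmidt := isSchmidtSymmetric_iff_posSemidef_realign ρ
  ⟨hSchmidt.trans traceNorm_eq_trace_iff_posSemidef.symm, hSchmidt⟩

/-- **Characterization of Schmidt-symmetric states (Theorem 4).** A density matrix `ρ`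
admits a decomposition `ρ = Σ_i λ_i A_i ⊗ A_i^*` with `λ_i ≥ 0` and `{A_i}` orthonormal
iff `‖R(ρ)‖_tr = Tr R(ρ)`, equivalently iff `R(ρ)` is positive semidefinite. -/
theorem schmidt_symmetric_characterization {d : ℕ}
    (ρ : Matrix (Fin d × Fin d) (Fin d × Fin d) ℂ)
    (hρ : IsDensityMatrix ρ) :
    ((∃ (r : ℕ) (lam : Fin r → ℝ) (A : Fin r → Matrix (Fin d) (Fin d) ℂ),
        (∀ i, 0 ≤ lam i) ∧
        (∀ i j, ((A i)ᴴ * A j).trace = if i = j then 1 else 0) ∧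
        ρ = ∑ i, (lam i : ℂ) • (A i ⊗ₖ (A i).map (starRingEnd ℂ))) ↔
      (traceNorm (realign ρ) : ℂ) = (realign ρ).trace) ∧
    ((∃ (r : ℕ) (lam : Fin r → ℝ) (A : Fin r → Matrix (Fin d) (Fin d) ℂ),
        (∀ i, 0 ≤ lam i) ∧
        (∀ i j, ((A i)ᴴ * A j).trace = if i = j then 1 else 0) ∧
        ρ = ∑ i, (lam i : ℂ) • (A i ⊗ₖ (A i).map (starRingEnd ℂ))) ↔
      (realign ρ).PosSemidef) :=
  schmidt_symmetric_characterization_general ρ
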